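/- Let α ∈ (0,1), C₀ > 0, let A : ℝ → ℝ be continuous, and let A⁺, A⁻ ∈ ℝ be such that |A(ρ) − A⁺| ≤ C₀ e^{−αρ} and |A(−ρ) − A⁻| ≤ C₀ e^{−αρ} for all ρ ≥ 0, and assume ∫_ℝ A(ρ) θ₀'(ρ) dρ = 0. Then: (i) the bounded, twice continuously differentiable solution w : ℝ → ℝ of w'' − f''(θ₀) w = A on ℝ with w(0) = 0 is unique; and (ii) there is a constant C > 0 such that for all ρ ≥ 0: |w(ρ) + A⁺| ≤ C e^{−αρ}, |w(−ρ) + A⁻| ≤ C e^{−αρ}, |w'(ρ)| + |w'(−ρ)| ≤ C e^{−αρ}, and |w''(ρ)| + |w''(−ρ)| ≤ C e^{−αρ}. -/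

import Mathlib

open MeasureTheory

set_option maxHeartbeats 1000000

/-- The optimal profile `θ₀(ρ) = tanh(ρ/2)`. -/
noncomputable def optimalProfile : ℝ → ℝ := fun ρ => Real.tanh (ρ / 2)

/-- `w` is a bounded, twice continuously differentiable solution of the linearized
Allen–Cahn equation `w'' − f''(θ₀) w = A` on `ℝ` with `w(0) = 0`,
where `f''(c) = (1/2)(3c² − 1)`. -/
def IsLinACSolution (A w : ℝ → ℝ) : Prop :=
  (∃ C : ℝ, ∀ ρ : ℝ, |w ρ| ≤ C) ∧
  ContDiff ℝ 2 w ∧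
  (∀ ρ : ℝ,
    deriv (deriv w) ρ - (1 / 2) * (3 * (optimalProfile ρ) ^ 2 - 1) * w ρ = A ρ) ∧
  w 0 = 0

noncomputable def phiAC : ℝ → ℝ := fun ρ => (1 - Real.tanh (ρ / 2) ^ 2) / 2

noncomputable def qAC : ℝ → ℝ := fun ρ => (1 / 2) * (3 * (optimalProfile ρ) ^ 2 - 1)

lemma hasDerivAt_tanh (x : ℝ) : HasDerivAt Real.tanh (1 - Real.tanh x ^ 2) x := by
  have hc : Real.cosh x ≠ 0 := ne_of_gt (Real.cosh_pos x)
  have h := (Real.hasDerivAt_sinh x).div (Real.hasDerivAt_cosh x) hc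
  have : (Real.cosh x * Real.cosh x - Real.sinh x * Real.sinh x) / Real.cosh x ^ 2
      = 1 - Real.tanh x ^ 2 := by
    rw [Real.tanh_eq_sinh_div_cosh, div_pow]
    field_simp
  rw [this] at h
  exact h.congr_of_eventuallyEq
    (Filter.Eventually.of_forall fun y => Real.tanh_eq_sinh_div_cosh y)

lemma hasDerivAt_profile (ρ : ℝ) : HasDerivAt optimalProfile (phiAC ρ) ρ := by
  have h := (hasDerivAt_tanh (ρ / 2)).comp ρ ((hasDerivAt_id ρ).div_const 2)
  have e : phiAC ρ = (1 - Real.tanh (ρ / 2) ^ 2) * (1 / 2) := by simp only [phiAC]; ring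
  rw [e]; exact h

lemma tanh_sq_lt_one (x : ℝ) : Real.tanh x ^ 2 < 1 := by
  have hc : 0 < Real.cosh x := Real.cosh_pos x
  rw [Real.tanh_eq_sinh_div_cosh, div_pow, div_lt_one (by positivity)]
  nlinarith [Real.cosh_sq_sub_sinh_sq x]

lemma phiAC_pos (ρ : ℝ) : 0 < phiAC ρ := by
  have := tanh_sq_lt_one (ρ / 2); simp only [phiAC]; linarith

lemma phiAC_eq (ρ : ℝ) : phiAC ρ = 2 / (Real.exp (ρ / 2) + Real.exp (-(ρ / 2))) ^ 2 := by
  have hc : 0 < Real.cosh (ρ / 2) := Real.cosh_pos _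
  have h1 : 1 - Real.tanh (ρ / 2) ^ 2 = 1 / Real.cosh (ρ / 2) ^ 2 := by
    rw [Real.tanh_eq_sinh_div_cosh, div_pow]
    field_simp
    linarith [Real.cosh_sq_sub_sinh_sq (ρ / 2)]
  rw [phiAC]
  simp only [h1, Real.cosh_eq]
  field_simp

lemma sq_exp_half_bounds (ρ : ℝ) (hρ : 0 ≤ ρ) :
    Real.exp ρ ≤ (Real.exp (ρ / 2) + Real.exp (-(ρ / 2))) ^ 2 ∧
    (Real.exp (ρ / 2) + Real.exp (-(ρ / 2))) ^ 2 ≤ 4 * Real.exp ρ := by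
  have he : Real.exp (ρ / 2) ^ 2 = Real.exp ρ := by
    rw [sq, ← Real.exp_add]; ring_nf
  have hle : Real.exp (-(ρ / 2)) ≤ Real.exp (ρ / 2) := by
    apply Real.exp_le_exp.2; linarith
  constructor <;> nlinarith [Real.exp_pos (ρ / 2), Real.exp_pos (-(ρ / 2))]

lemma phiAC_le (ρ : ℝ) (hρ : 0 ≤ ρ) : phiAC ρ ≤ 2 * Real.exp (-ρ) := by
  have h1 := (sq_exp_half_bounds ρ hρ).1
  have hmul : Real.exp (-ρ) * Real.exp ρ = 1 := by rw [← Real.exp_add]; simp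
  rw [phiAC_eq, div_le_iff₀ (by positivity)]
  nlinarith [Real.exp_pos (-ρ)]

lemma phiAC_ge (ρ : ℝ) (hρ : 0 ≤ ρ) : Real.exp (-ρ) / 2 ≤ phiAC ρ := by
  have h2 := (sq_exp_half_bounds ρ hρ).2
  have hmul : Real.exp (-ρ) * Real.exp ρ = 1 := by rw [← Real.exp_add]; simp
  rw [phiAC_eq, div_le_div_iff₀ (by norm_num) (by positivity)]
  nlinarith [Real.exp_pos (-ρ)]

lemma qAC_eq (ρ : ℝ) : qAC ρ = 1 - 3 * phiAC ρ := by
  simp only [qAC, phiAC, optimalProfile]; ring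

lemma qAC_even (ρ : ℝ) : qAC (-ρ) = qAC ρ := by
  simp only [qAC, optimalProfile, neg_div, Real.tanh_neg]; ring

lemma phiAC_even (ρ : ℝ) : phiAC (-ρ) = phiAC ρ := by
  simp only [phiAC, neg_div, Real.tanh_neg]; ring

lemma abs_qAC_le (ρ : ℝ) : |qAC ρ| ≤ 1 := by
  have h1 := tanh_sq_lt_one (ρ / 2)
  have h2 := sq_nonneg (Real.tanh (ρ / 2))
  rw [abs_le]; constructor <;> · simp only [qAC, optimalProfile]; nlinarith

lemma qAC_ge (ρ : ℝ) (hρ : 0 ≤ ρ) : 1 - 6 * Real.exp (-ρ) ≤ qAC ρ := by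
  have := phiAC_le ρ hρ
  rw [qAC_eq]; linarith

lemma hasDerivAt_profile' (ρ : ℝ) :
    HasDerivAt (fun s => Real.tanh (s / 2)) (phiAC ρ) ρ := hasDerivAt_profile ρ

lemma hasDerivAt_phiAC (ρ : ℝ) :
    HasDerivAt phiAC (-(Real.tanh (ρ / 2)) * phiAC ρ) ρ := by
  have h := (((hasDerivAt_profile' ρ).pow 2).const_sub 1).div_const 2
  refine h.congr_deriv ?_
  push_cast
  ring

lemma hasDerivAt_phiAC' (ρ : ℝ) :
    HasDerivAt (fun s => -(Real.tanh (s / 2)) * phiAC s) (qAC ρ * phiAC ρ) ρ := by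
  have h := ((hasDerivAt_profile' ρ).neg).mul (hasDerivAt_phiAC ρ)
  have heq : -phiAC ρ * phiAC ρ
      + -(Real.tanh (ρ / 2)) * (-(Real.tanh (ρ / 2)) * phiAC ρ) = qAC ρ * phiAC ρ := by
    simp only [phiAC, qAC, optimalProfile]; ring
  have h' : HasDerivAt (fun s => -(Real.tanh (s / 2)) * phiAC s) (-phiAC ρ * phiAC ρ
      + -(Real.tanh (ρ / 2)) * (-(Real.tanh (ρ / 2)) * phiAC ρ)) ρ := h
  rw [heq] at h'
  exact h'

lemma continuous_phiAC : Continuous phiAC :=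
  continuous_iff_continuousAt.2 fun ρ => (hasDerivAt_phiAC ρ).continuousAt

lemma phiAC_zero : phiAC 0 = 1 / 2 := by
  simp [phiAC, Real.tanh_zero]

lemma exp_two_integral (ρ : ℝ) (c : ℝ) :
    ∫ s in (0:ℝ)..ρ, c * Real.exp (2 * s) / 4
      = c * Real.exp (2 * ρ) / 8 - c / 8 := by
  have hd : ∀ s ∈ Set.uIcc (0:ℝ) ρ,
      HasDerivAt (fun s => c * Real.exp (2 * s) / 8) (c * Real.exp (2 * s) / 4) s := by
    intro s _
    have hexp : HasDerivAt (fun s : ℝ => Real.exp (2 * s)) (Real.exp (2 * s) * (2 * 1)) s :=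
      ((hasDerivAt_id' (x := s)).const_mul 2).exp
    have h := (hexp.const_mul c).div_const 8
    refine h.congr_deriv ?_
    ring
  have hint : IntervalIntegrable (fun s => c * Real.exp (2 * s) / 4) volume 0 ρ :=
    (Continuous.intervalIntegrable (by continuity) 0 ρ)
  rw [intervalIntegral.integral_eq_sub_of_hasDerivAt hd hint]
  simp

lemma slope_nonpos (v : ℝ → ℝ) (M c : ℝ) (hb : ∀ ρ, v ρ ≤ M)
    (hg : ∀ ρ, HasDerivAt (fun s => v s / phiAC s) (c / phiAC ρ ^ 2) ρ) : c ≤ 0 := by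
  by_contra hc
  push_neg at hc
  set g : ℝ → ℝ := fun s => v s / phiAC s with hgdef
  set M₁ : ℝ := |M| with hM₁
  have hM₁0 : 0 ≤ M₁ := abs_nonneg M
  have hbM : ∀ ρ, v ρ ≤ M₁ := fun ρ => (hb ρ).trans (le_abs_self M)
  have hcont : Continuous fun s => c / phiAC s ^ 2 :=
    continuous_const.div (continuous_phiAC.pow 2)
      (fun s => by have := phiAC_pos s; positivity)
  have key : ∀ ρ : ℝ, 0 ≤ ρ → g 0 + c * (Real.exp (2 * ρ) - 1) / 8 ≤ g ρ := by
    intro ρ hρ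
    have hftc : ∫ s in (0:ℝ)..ρ, c / phiAC s ^ 2 = g ρ - g 0 :=
      intervalIntegral.integral_eq_sub_of_hasDerivAt
        (fun s _ => hg s) (hcont.intervalIntegrable 0 ρ)
    have hmono : ∫ s in (0:ℝ)..ρ, c * Real.exp (2 * s) / 4
        ≤ ∫ s in (0:ℝ)..ρ, c / phiAC s ^ 2 := by
      apply intervalIntegral.integral_mono_on hρ
        ((Continuous.intervalIntegrable (by continuity) 0 ρ))
        (hcont.intervalIntegrable 0 ρ)
      intro s hs
      have hle : phiAC s ≤ 2 * Real.exp (-s) := phiAC_le s hs.1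
      have hpos : 0 < phiAC s := phiAC_pos s
      have hsq : phiAC s ^ 2 ≤ 4 * Real.exp (-(2 * s)) := by
        have he : Real.exp (-s) ^ 2 = Real.exp (-(2 * s)) := by
          rw [sq, ← Real.exp_add]; ring_nf
        nlinarith [Real.exp_pos (-s)]
      rw [div_le_div_iff₀ (by norm_num) (by positivity)]
      have hemul : c * (Real.exp (2 * s) * Real.exp (-(2 * s))) = c := by
        rw [← Real.exp_add]; simp
      nlinarith [mul_le_mul_of_nonneg_left hsq
        (mul_nonneg hc.le (Real.exp_pos (2 * s)).le)]
    rw [hftc, exp_two_integral] at hmono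
    linarith
  set A : ℝ := 16 * (M₁ + 1) + 8 * |g 0| + c with hA
  set T : ℝ := max 1 (A / c) with hT
  have hT1 : (1:ℝ) ≤ T := le_max_left _ _
  have hT0 : (0:ℝ) < T := by linarith
  have hcT : A ≤ c * T := by
    have h2 : A / c ≤ T := le_max_right _ _
    calc A = c * (A / c) := by rw [mul_div_cancel₀ _ (ne_of_gt hc)]
      _ ≤ c * T := mul_le_mul_of_nonneg_left h2 hc.le
  set ρ := Real.log T with hρdef
  have hρ0 : 0 ≤ ρ := Real.log_nonneg hT1
  have heT : Real.exp ρ = T := Real.exp_log hT0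
  have hbracket : 2 * T * (M₁ + 1) ≤ g 0 + c * (Real.exp (2 * ρ) - 1) / 8 := by
    have he2 : Real.exp (2 * ρ) = T ^ 2 := by
      rw [two_mul, Real.exp_add, heT, sq]
    rw [he2]
    have hmm := mul_le_mul_of_nonneg_right hcT hT0.le
    nlinarith [mul_nonneg (abs_nonneg (g 0)) (by linarith : (0:ℝ) ≤ T - 1),
      mul_nonneg hc.le (by linarith : (0:ℝ) ≤ T - 1),
      neg_abs_le (g 0), hM₁0]
  have hbrack0 : 0 ≤ g 0 + c * (Real.exp (2 * ρ) - 1) / 8 := by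
    nlinarith
  have hge : g 0 + c * (Real.exp (2 * ρ) - 1) / 8 ≤ g ρ := key ρ hρ0
  have hvρ : v ρ = g ρ * phiAC ρ := by
    simp only [hgdef]
    rw [div_mul_cancel₀ _ (ne_of_gt (phiAC_pos ρ))]
  have hφge : Real.exp (-ρ) / 2 ≤ phiAC ρ := phiAC_ge ρ hρ0
  have h1 : (g 0 + c * (Real.exp (2 * ρ) - 1) / 8) * (Real.exp (-ρ) / 2)
      ≤ g ρ * phiAC ρ :=
    mul_le_mul hge hφge (by positivity) (hbrack0.trans hge)
  have hexpneg : Real.exp (-ρ) = 1 / T := by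
    rw [Real.exp_neg, heT, one_div]
  rw [hexpneg] at h1
  have h2 : M₁ + 1 ≤ (g 0 + c * (Real.exp (2 * ρ) - 1) / 8) * (1 / T / 2) := by
    have h3 := mul_le_mul_of_nonneg_right hbracket (by positivity : (0:ℝ) ≤ 1 / T / 2)
    calc M₁ + 1 = 2 * T * (M₁ + 1) * (1 / T / 2) := by field_simp
      _ ≤ _ := h3
  have : M₁ + 1 ≤ v ρ := by rw [hvρ]; exact h2.trans h1
  linarith [hbM ρ]

lemma hom_unique (v : ℝ → ℝ) (M : ℝ) (hb : ∀ ρ, |v ρ| ≤ M)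
    (hv : ContDiff ℝ 2 v) (hode : ∀ ρ, deriv (deriv v) ρ = qAC ρ * v ρ)
    (h0 : v 0 = 0) : ∀ ρ, v ρ = 0 := by
  have hv2 : ContDiff ℝ (1 + 1) v := by
    rw [show ((1 : WithTop ℕ∞) + 1) = 2 by norm_num]; exact hv
  have hd1 : Differentiable ℝ v := hv.differentiable two_ne_zero
  have hv' : ContDiff ℝ 1 (deriv v) := (contDiff_succ_iff_deriv.mp hv2).2.2
  have hd2 : Differentiable ℝ (deriv v) := hv'.differentiable one_ne_zero
  set W : ℝ → ℝ := fun ρ =>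
    phiAC ρ * deriv v ρ - (-(Real.tanh (ρ / 2)) * phiAC ρ) * v ρ with hWdef
  have hW : ∀ ρ, HasDerivAt W 0 ρ := by
    intro ρ
    have h1 := (hasDerivAt_phiAC ρ).mul ((hd2 ρ).hasDerivAt)
    have h2 := (hasDerivAt_phiAC' ρ).mul ((hd1 ρ).hasDerivAt)
    have h := h1.sub h2
    have heq : -(Real.tanh (ρ / 2)) * phiAC ρ * deriv v ρ
          + phiAC ρ * deriv (deriv v) ρ
        - (qAC ρ * phiAC ρ * v ρ
          + -(Real.tanh (ρ / 2)) * phiAC ρ * deriv v ρ) = 0 := by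
      rw [hode ρ]; ring
    rw [heq] at h
    exact h
  have hWconst : ∀ ρ, W ρ = W 0 :=
    fun ρ => is_const_of_deriv_eq_zero
      (fun x => (hW x).differentiableAt) (fun x => (hW x).deriv) ρ 0
  have hgderiv : ∀ ρ, HasDerivAt (fun s => v s / phiAC s) (W 0 / phiAC ρ ^ 2) ρ := by
    intro ρ
    have h := ((hd1 ρ).hasDerivAt).div (hasDerivAt_phiAC ρ) (ne_of_gt (phiAC_pos ρ))
    have heq : (deriv v ρ * phiAC ρ - v ρ * (-(Real.tanh (ρ / 2)) * phiAC ρ))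
        / phiAC ρ ^ 2 = W 0 / phiAC ρ ^ 2 := by
      rw [← hWconst ρ, hWdef]; ring_nf
    rw [heq] at h
    exact h
  have hc1 : W 0 ≤ 0 :=
    slope_nonpos v M (W 0) (fun ρ => (abs_le.mp (hb ρ)).2) hgderiv
  have hc2 : -(W 0) ≤ 0 := by
    apply slope_nonpos (fun s => -v s) M (-(W 0)) (fun ρ => by
      show -v ρ ≤ M
      linarith [(abs_le.mp (hb ρ)).1])
    intro ρ
    have h : HasDerivAt (fun s => -(v s / phiAC s)) (-(W 0 / phiAC ρ ^ 2)) ρ :=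
      (hgderiv ρ).neg
    have he : (fun s => -(v s / phiAC s)) = fun s => -v s / phiAC s := by
      funext s; ring
    rw [he] at h
    have he2 : -(W 0 / phiAC ρ ^ 2) = -W 0 / phiAC ρ ^ 2 := by ring
    rw [he2] at h
    exact h
  have hc0 : W 0 = 0 := le_antisymm hc1 (by linarith)
  have hgconst : ∀ ρ, v ρ / phiAC ρ = v 0 / phiAC 0 := by
    intro ρ
    exact is_const_of_deriv_eq_zero (fun x => (hgderiv x).differentiableAt)
      (fun x => by rw [(hgderiv x).deriv, hc0, zero_div]) ρ 0
  intro ρ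
  have := hgconst ρ
  rw [h0, zero_div] at this
  have hφ := phiAC_pos ρ
  field_simp at this
  simpa using this

lemma cosh_ge_half_exp (x : ℝ) : Real.exp x / 2 ≤ Real.cosh x := by
  rw [Real.cosh_eq]
  have := Real.exp_pos (-x)
  linarith

lemma contdiff_two_unpack (h : ℝ → ℝ) (hh : ContDiff ℝ 2 h) :
    Differentiable ℝ h ∧ Differentiable ℝ (deriv h) ∧ Continuous (deriv (deriv h)) := by
  have hv2 : ContDiff ℝ (1 + 1) h := by
    rw [show ((1 : WithTop ℕ∞) + 1) = 2 by norm_num]; exact hh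
  have h1 : ContDiff ℝ 1 (deriv h) := (contDiff_succ_iff_deriv.mp hv2).2.2
  exact ⟨hh.differentiable two_ne_zero, (contDiff_one_iff_deriv.mp h1).1,
    (contDiff_one_iff_deriv.mp h1).2⟩

lemma maxp (h : ℝ → ℝ) (R K β : ℝ) (hβ : 0 < β)
    (hKb : ∀ ρ, R ≤ ρ → -K ≤ h ρ)
    (hq : ∀ ρ, R ≤ ρ → β ^ 2 ≤ qAC ρ)
    (hh : ContDiff ℝ 2 h) (hhR : 0 ≤ h R)
    (hineq : ∀ ρ, R ≤ ρ → deriv (deriv h) ρ ≤ qAC ρ * h ρ) :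
    ∀ ρ, R ≤ ρ → 0 ≤ h ρ := by
  obtain ⟨hd1, hd2, hcont2⟩ := contdiff_two_unpack h hh
  intro ρ₁ hρ₁
  by_contra hneg
  push_neg at hneg
  have hcoshpos : (0:ℝ) < Real.cosh (β * (ρ₁ - R)) := Real.cosh_pos _
  -- it suffices to show positivity of the ε-perturbed function
  have main : ∀ ε : ℝ, 0 < ε → 0 ≤ h ρ₁ + ε * Real.cosh (β * (ρ₁ - R)) := by
    intro ε hε
    by_contra H
    push_neg at H
    set hE : ℝ → ℝ := fun s => h s + ε * Real.cosh (β * (s - R)) with hEdef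
    have hK0 : 0 < K := by
      have := hKb ρ₁ hρ₁
      nlinarith
    -- derivative computations
    have c1 : ∀ s : ℝ, HasDerivAt (fun s => ε * Real.cosh (β * (s - R)))
        (ε * (Real.sinh (β * (s - R)) * β)) s := by
      intro s
      have hb : HasDerivAt (fun s : ℝ => β * (s - R)) β s := by
        simpa using ((hasDerivAt_id' (x := s)).sub_const R).const_mul β
      exact (hb.cosh).const_mul ε
    have derivE : ∀ s, HasDerivAt hE (deriv h s + ε * (Real.sinh (β * (s - R)) * β)) s :=
      fun s => ((hd1 s).hasDerivAt).add (c1 s)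
    have derivE' : deriv hE = fun s => deriv h s + ε * (Real.sinh (β * (s - R)) * β) :=
      funext fun s => (derivE s).deriv
    have c2 : ∀ s : ℝ, HasDerivAt (fun s => ε * (Real.sinh (β * (s - R)) * β))
        (ε * (Real.cosh (β * (s - R)) * β * β)) s := by
      intro s
      have hb : HasDerivAt (fun s : ℝ => β * (s - R)) β s := by
        simpa using ((hasDerivAt_id' (x := s)).sub_const R).const_mul β
      exact ((hb.sinh).mul_const β).const_mul ε
    have derivE2 : ∀ s, deriv (deriv hE) s
        = deriv (deriv h) s + ε * (Real.cosh (β * (s - R)) * β * β) := by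
      intro s
      rw [derivE']
      exact (((hd2 s).hasDerivAt).add (c2 s)).deriv
    have hlin : Continuous fun s : ℝ => β * (s - R) :=
      continuous_const.mul (continuous_id.sub continuous_const)
    have hcoshc : Continuous fun s : ℝ => Real.cosh (β * (s - R)) :=
      Real.continuous_cosh.comp hlin
    have hEcont : Continuous hE := hd1.continuous.add (continuous_const.mul hcoshc)
    -- choose T
    set T : ℝ := max (ρ₁ + 1) (R + Real.log (2 * (K + 1) / ε) / β + 1) with hTdef
    have hT1 : ρ₁ + 1 ≤ T := le_max_left _ _
    have hT2 : R + Real.log (2 * (K + 1) / ε) / β + 1 ≤ T := le_max_right _ _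
    have hRT : R < T := by linarith
    have hETpos : 0 < hE T := by
      have harg : 0 < 2 * (K + 1) / ε := by positivity
      have hexp : 2 * (K + 1) / ε ≤ Real.exp (β * (T - R)) := by
        rw [← Real.exp_log harg]
        apply Real.exp_le_exp.2
        have h5 : Real.log (2 * (K + 1) / ε) / β ≤ T - R := by linarith
        calc Real.log (2 * (K + 1) / ε)
            = β * (Real.log (2 * (K + 1) / ε) / β) := by field_simp
          _ ≤ β * (T - R) := mul_le_mul_of_nonneg_left h5 hβ.le
      have hcosh := cosh_ge_half_exp (β * (T - R))
      have hKT := hKb T (by linarith)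
      have h3 : 2 * (K + 1) ≤ ε * Real.exp (β * (T - R)) := by
        have h4 := mul_le_mul_of_nonneg_left hexp hε.le
        have h6 : ε * (2 * (K + 1) / ε) = 2 * (K + 1) := by field_simp
        rwa [h6] at h4
      have : K + 1 ≤ ε * Real.cosh (β * (T - R)) := by
        nlinarith [mul_le_mul_of_nonneg_left hcosh hε.le]
      simp only [hEdef]
      linarith
    -- minimum on [R, T]
    obtain ⟨m, hm, hmin⟩ := isCompact_Icc.exists_isMinOn
      (Set.nonempty_Icc.2 hRT.le) (hEcont.continuousOn (s := Set.Icc R T))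
    have hEm_neg : hE m < 0 := by
      have := hmin (Set.mem_Icc.2 ⟨hρ₁, by linarith⟩)
      exact lt_of_le_of_lt this H
    have hmR : R < m := by
      rcases lt_or_eq_of_le hm.1 with h' | h'
      · exact h'
      · exfalso
        have : hE R = h R + ε := by simp [hEdef]
        rw [← h'] at hEm_neg
        rw [this] at hEm_neg
        linarith
    have hmT : m < T := by
      rcases lt_or_eq_of_le hm.2 with h' | h'
      · exact h'
      · exfalso; rw [h'] at hEm_neg; linarith
    have hlm : IsLocalMin hE m := hmin.isLocalMin (Icc_mem_nhds hmR hmT)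
    have hD0 : deriv hE m = 0 := hlm.deriv_eq_zero
    -- second derivative is negative at m
    have hqm := hq m (by linarith)
    have hsecond : deriv (deriv hE) m < 0 := by
      rw [derivE2]
      have h1 := hineq m (by linarith)
      have hcosh := Real.cosh_pos (β * (m - R))
      have hβ2 : 0 < β ^ 2 := by positivity
      have hq0 : 0 < qAC m := lt_of_lt_of_le hβ2 hqm
      have key : deriv (deriv h) m + ε * (Real.cosh (β * (m - R)) * β * β)
          ≤ qAC m * hE m := by
        have h2 : ε * (Real.cosh (β * (m - R)) * β * β)
            ≤ ε * (Real.cosh (β * (m - R)) * qAC m) := by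
          apply mul_le_mul_of_nonneg_left _ hε.le
          rw [mul_assoc]
          exact mul_le_mul_of_nonneg_left (by nlinarith) hcosh.le
        simp only [hEdef]
        nlinarith
      nlinarith
    -- continuity gives a neighborhood where the second derivative is negative
    have hcontD2 : Continuous (deriv (deriv hE)) := by
      have : deriv (deriv hE) = fun s => deriv (deriv h) s
          + ε * (Real.cosh (β * (s - R)) * β * β) := funext derivE2
      rw [this]
      exact hcont2.add (continuous_const.mul
        ((hcoshc.mul continuous_const).mul continuous_const))
    have hnb : ∀ᶠ s in nhds m, deriv (deriv hE) s < 0 :=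
      (hcontD2.continuousAt).eventually_lt continuousAt_const hsecond
    obtain ⟨δ, hδ, hball⟩ := Metric.eventually_nhds_iff_ball.mp hnb
    set δ' : ℝ := min (δ / 2) ((T - m) / 2) with hδ'def
    have hδ'pos : 0 < δ' := by
      apply lt_min (by linarith)
      linarith
    have hsub : Set.Icc m (m + δ') ⊆ Set.Icc R T := by
      intro x hx
      constructor
      · linarith [hx.1]
      · have : δ' ≤ (T - m) / 2 := min_le_right _ _
        linarith [hx.2]
    have hDEneg : ∀ x ∈ Set.Ioo m (m + δ'), deriv (deriv hE) x < 0 := by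
      intro x hx
      apply hball
      rw [Metric.mem_ball, Real.dist_eq, abs_lt]
      have : δ' ≤ δ / 2 := min_le_left _ _
      constructor <;> [linarith [hx.1]; linarith [hx.2]]
    have hDanti : StrictAntiOn (deriv hE) (Set.Icc m (m + δ')) := by
      apply strictAntiOn_of_deriv_neg (convex_Icc _ _)
      · rw [derivE']
        exact (hd2.continuous.add (continuous_const.mul
          ((Real.continuous_sinh.comp hlin).mul continuous_const))).continuousOn
      · intro x hx
        rw [interior_Icc] at hx
        exact hDEneg x hx
    have hmem1 : m ∈ Set.Icc m (m + δ') := ⟨le_refl m, by linarith⟩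
    have hmem2 : m + δ' ∈ Set.Icc m (m + δ') := ⟨by linarith, le_refl _⟩
    have hEanti : StrictAntiOn hE (Set.Icc m (m + δ')) := by
      apply strictAntiOn_of_deriv_neg (convex_Icc _ _) (hEcont.continuousOn)
      intro x hx
      rw [interior_Icc] at hx
      have h7 := hDanti hmem1 ⟨hx.1.le, hx.2.le⟩ hx.1
      rw [hD0] at h7
      exact h7
    have hlt : hE (m + δ') < hE m := hEanti hmem1 hmem2 (by linarith)
    have h8 : hE m ≤ hE (m + δ') := hmin (hsub hmem2)
    linarith
  set ε₀ := -h ρ₁ / (2 * Real.cosh (β * (ρ₁ - R))) with hε₀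
  have hε₀pos : 0 < ε₀ := div_pos (by linarith) (by positivity)
  have hmain := main ε₀ hε₀pos
  have heq : ε₀ * Real.cosh (β * (ρ₁ - R)) = -h ρ₁ / 2 := by
    rw [hε₀]
    field_simp
  linarith

lemma one_side (u A₁ : ℝ → ℝ) (a K α C₀ : ℝ) (hα : 0 < α) (hα1 : α < 1)
    (hu2 : ContDiff ℝ 2 u) (hb : ∀ ρ, |u ρ| ≤ K)
    (hode : ∀ ρ, deriv (deriv u) ρ = qAC ρ * u ρ + A₁ ρ)
    (hC₀ : 0 < C₀) (hA : ∀ ρ, 0 ≤ ρ → |A₁ ρ - a| ≤ C₀ * Real.exp (-α * ρ)) :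
    ∃ C, 0 < C ∧ ∀ ρ, 0 ≤ ρ → |u ρ + a| ≤ C * Real.exp (-α * ρ) ∧
      |deriv u ρ| ≤ C * Real.exp (-α * ρ) ∧
      |deriv (deriv u) ρ| ≤ C * Real.exp (-α * ρ) := by
  obtain ⟨hd1, hd2, hcont2⟩ := contdiff_two_unpack u hu2
  have hK0 : 0 ≤ K := le_trans (abs_nonneg _) (hb 0)
  set β : ℝ := (1 + α) / 2 with hβdef
  have hαβ : α < β := by rw [hβdef]; linarith
  have hβ1 : β < 1 := by rw [hβdef]; linarith
  have hβpos : 0 < β := by linarith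
  have hβ2 : 0 < 1 - β ^ 2 := by nlinarith
  have hβα2 : 0 < β ^ 2 - α ^ 2 := by nlinarith
  set R : ℝ := Real.log (6 / (1 - β ^ 2)) with hRdef
  have hargpos : 0 < 6 / (1 - β ^ 2) := by positivity
  have hR0 : 0 ≤ R := by
    apply Real.log_nonneg
    rw [le_div_iff₀ hβ2]
    nlinarith
  have hexpR : Real.exp (-R) = (1 - β ^ 2) / 6 := by
    rw [Real.exp_neg, hRdef, Real.exp_log hargpos]
    field_simp
  have hqR : ∀ ρ, R ≤ ρ → β ^ 2 ≤ qAC ρ := by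
    intro ρ hρ
    have h1 := qAC_ge ρ (le_trans hR0 hρ)
    have h2 : Real.exp (-ρ) ≤ (1 - β ^ 2) / 6 := by
      rw [← hexpR]; exact Real.exp_le_exp.2 (by linarith)
    linarith
  -- the forcing of the shifted function
  set B : ℝ → ℝ := fun ρ => A₁ ρ - qAC ρ * a with hBdef
  set C₁ : ℝ := C₀ + 6 * |a| + 1 with hC₁def
  have hC₁pos : 0 < C₁ := by positivity
  have hBbound : ∀ ρ, 0 ≤ ρ → |B ρ| ≤ C₁ * Real.exp (-α * ρ) := by
    intro ρ hρ
    have h1 := hA ρ hρ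
    have h2 : |1 - qAC ρ| ≤ 6 * Real.exp (-ρ) := by
      rw [qAC_eq]
      have := phiAC_pos ρ
      have := phiAC_le ρ hρ
      rw [abs_of_nonneg (by linarith)]
      linarith
    have h3 : Real.exp (-ρ) ≤ Real.exp (-α * ρ) := by
      apply Real.exp_le_exp.2
      nlinarith
    have h4 : B ρ = (A₁ ρ - a) + (1 - qAC ρ) * a := by rw [hBdef]; ring
    have h5 : |B ρ| ≤ |A₁ ρ - a| + |1 - qAC ρ| * |a| := by
      rw [h4]
      exact le_trans (abs_add_le _ _) (by rw [abs_mul])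
    have h6 : |1 - qAC ρ| * |a| ≤ 6 * Real.exp (-α * ρ) * |a| :=
      mul_le_mul_of_nonneg_right (le_trans h2 (by nlinarith)) (abs_nonneg a)
    have hexp := Real.exp_pos (-α * ρ)
    rw [hC₁def]
    nlinarith [abs_nonneg a]
  set M : ℝ := |u R + a| + C₁ * Real.exp (-α * R) / (β ^ 2 - α ^ 2) with hMdef
  have hM0 : 0 < M := by positivity
  have hMkey : C₁ * Real.exp (-α * R) ≤ (β ^ 2 - α ^ 2) * M := by
    rw [hMdef]
    have : (β ^ 2 - α ^ 2) * (C₁ * Real.exp (-α * R) / (β ^ 2 - α ^ 2))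
        = C₁ * Real.exp (-α * R) := by field_simp
    nlinarith [abs_nonneg (u R + a)]
  set Φ : ℝ → ℝ := fun ρ => M * Real.exp (-α * (ρ - R)) with hΦdef
  have hΦpos : ∀ ρ, 0 < Φ ρ := fun ρ => by positivity
  have hΦd1 : ∀ ρ, HasDerivAt Φ (-α * Φ ρ) ρ := by
    intro ρ
    have h := ((((hasDerivAt_id' (x := ρ)).sub_const R).const_mul (-α)).exp).const_mul M
    refine h.congr_deriv ?_
    simp only [hΦdef]
    ring
  have hΦd2 : ∀ ρ, HasDerivAt (fun s => -α * Φ s) (α ^ 2 * Φ ρ) ρ := by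
    intro ρ
    have h := (hΦd1 ρ).const_mul (-α)
    refine h.congr_deriv ?_
    ring
  have hΦcd : ContDiff ℝ 2 Φ :=
    contDiff_const.mul (Real.contDiff_exp.comp
      (contDiff_const.mul (contDiff_id.sub contDiff_const)))
  have hΦexp : ∀ ρ, (β ^ 2 - α ^ 2) * Φ ρ ≥ C₁ * Real.exp (-α * ρ) := by
    intro ρ
    have hsplit : Real.exp (-α * ρ) = Real.exp (-α * R) * Real.exp (-α * (ρ - R)) := by
      rw [← Real.exp_add]; ring_nf
    rw [hsplit, hΦdef]
    have hE := Real.exp_pos (-α * (ρ - R))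
    calc C₁ * (Real.exp (-α * R) * Real.exp (-α * (ρ - R)))
        = (C₁ * Real.exp (-α * R)) * Real.exp (-α * (ρ - R)) := by ring
      _ ≤ ((β ^ 2 - α ^ 2) * M) * Real.exp (-α * (ρ - R)) :=
          mul_le_mul_of_nonneg_right hMkey hE.le
      _ = (β ^ 2 - α ^ 2) * (M * Real.exp (-α * (ρ - R))) := by ring
  -- the two barrier functions
  have husecond : ∀ ρ, deriv (deriv u) ρ = qAC ρ * (u ρ + a) + B ρ := by
    intro ρ
    rw [hode ρ, hBdef]
    ring
  have key : ∀ σ : ℝ, σ = 1 ∨ σ = -1 → ∀ ρ, R ≤ ρ → 0 ≤ Φ ρ - σ * (u ρ + a) := by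
    intro σ hσ
    have hσ1 : |σ| = 1 := by rcases hσ with h | h <;> simp [h]
    set g : ℝ → ℝ := fun ρ => Φ ρ - σ * (u ρ + a) with hgdef
    have hgcd : ContDiff ℝ 2 g :=
      hΦcd.sub ((contDiff_const.mul (hu2.add contDiff_const)))
    have hgd1 : ∀ s, HasDerivAt g (-α * Φ s - σ * deriv u s) s := by
      intro s
      exact (hΦd1 s).sub ((((hd1 s).hasDerivAt).add_const a).const_mul σ)
    have hgd2 : ∀ s, deriv (deriv g) s
        = α ^ 2 * Φ s - σ * deriv (deriv u) s := by
      intro s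
      have h1 : deriv g = fun s => -α * Φ s - σ * deriv u s :=
        funext fun s => (hgd1 s).deriv
      rw [h1]
      exact ((hΦd2 s).sub (((hd2 s).hasDerivAt).const_mul σ)).deriv
    have hKb : ∀ ρ, R ≤ ρ → -(K + |a|) ≤ g ρ := by
      intro ρ _
      have h1 := hb ρ
      have h2 : |σ * (u ρ + a)| ≤ K + |a| := by
        rw [abs_mul, hσ1, one_mul]
        calc |u ρ + a| ≤ |u ρ| + |a| := abs_add_le _ _
          _ ≤ K + |a| := by linarith
      have := hΦpos ρ
      have := (abs_le.mp h2).2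
      simp only [hgdef]
      linarith
    have hgR : 0 ≤ g R := by
      have hΦR : Φ R = M := by simp [hΦdef]
      have h2 : |σ * (u R + a)| ≤ |u R + a| := by rw [abs_mul, hσ1, one_mul]
      have h3 := (abs_le.mp h2).2
      have h4 : |u R + a| ≤ M := by
        rw [hMdef]
        have : 0 ≤ C₁ * Real.exp (-α * R) / (β ^ 2 - α ^ 2) := by positivity
        linarith
      simp only [hgdef]
      rw [hΦR]
      linarith
    have hineq : ∀ ρ, R ≤ ρ → deriv (deriv g) ρ ≤ qAC ρ * g ρ := by
      intro ρ hρ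
      have hρ0 : 0 ≤ ρ := le_trans hR0 hρ
      rw [hgd2, husecond]
      have hq := hqR ρ hρ
      have hBb := hBbound ρ hρ0
      have hΦe := hΦexp ρ
      have hΦp := hΦpos ρ
      have hσB : -σ * B ρ ≤ C₁ * Real.exp (-α * ρ) := by
        have h8 : |σ * B ρ| ≤ C₁ * Real.exp (-α * ρ) := by
          rw [abs_mul, hσ1, one_mul]; exact hBb
        have h9 : -σ * B ρ ≤ |σ * B ρ| := by
          rw [← abs_neg (σ * B ρ)]
          calc -σ * B ρ = -(σ * B ρ) := by ring
            _ ≤ |-(σ * B ρ)| := le_abs_self _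
        linarith
      simp only [hgdef]
      linarith [mul_nonneg (sub_nonneg.2 hq) (hΦpos ρ).le, hΦe, hσB]
    exact maxp g R (K + |a|) β hβpos hKb hqR hgcd hgR hineq
  -- decay of z on [R, ∞), then globally
  set C₂ : ℝ := (M + K + |a|) * Real.exp (α * R) + 1 with hC₂def
  have hC₂pos : 0 < C₂ := by positivity
  have hzdecay : ∀ ρ, 0 ≤ ρ → |u ρ + a| ≤ C₂ * Real.exp (-α * ρ) := by
    intro ρ hρ
    have hexpR' : (1:ℝ) ≤ Real.exp (α * R) := Real.one_le_exp (by positivity)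
    rcases le_or_gt R ρ with hcase | hcase
    · have h1 := key 1 (Or.inl rfl) ρ hcase
      have h2 := key (-1) (Or.inr rfl) ρ hcase
      have habs : |u ρ + a| ≤ Φ ρ := by
        rw [abs_le]; constructor <;> [linarith; linarith]
      have hΦle : Φ ρ ≤ C₂ * Real.exp (-α * ρ) := by
        have hsplit : Real.exp (-α * (ρ - R)) = Real.exp (α * R) * Real.exp (-α * ρ) := by
          rw [← Real.exp_add]; ring_nf
        simp only [hΦdef]
        rw [hsplit, hC₂def]
        have hE := Real.exp_pos (-α * ρ)
        have hstep : M * Real.exp (α * R) ≤ (M + K + |a|) * Real.exp (α * R) + 1 := by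
          have h9 : 0 ≤ (K + |a|) * Real.exp (α * R) :=
            mul_nonneg (by linarith [abs_nonneg a]) (Real.exp_pos _).le
          nlinarith
        calc M * (Real.exp (α * R) * Real.exp (-α * ρ))
            = (M * Real.exp (α * R)) * Real.exp (-α * ρ) := by ring
          _ ≤ ((M + K + |a|) * Real.exp (α * R) + 1) * Real.exp (-α * ρ) :=
              mul_le_mul_of_nonneg_right hstep hE.le
      linarith
    · have h1 : |u ρ + a| ≤ K + |a| := le_trans (abs_add_le _ _) (by linarith [hb ρ])
      have h2 : (1:ℝ) ≤ Real.exp (α * R) * Real.exp (-α * ρ) := by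
        rw [← Real.exp_add]
        apply Real.one_le_exp
        nlinarith
      have := Real.exp_pos (-α * ρ)
      rw [hC₂def]
      nlinarith [abs_nonneg a]
  -- second derivative decay
  set C₃ : ℝ := C₂ + C₁ with hC₃def
  have hC₃pos : 0 < C₃ := by rw [hC₃def]; linarith
  have hseconddecay : ∀ ρ, 0 ≤ ρ → |deriv (deriv u) ρ| ≤ C₃ * Real.exp (-α * ρ) := by
    intro ρ hρ
    rw [husecond ρ]
    have h1 : |qAC ρ * (u ρ + a)| ≤ C₂ * Real.exp (-α * ρ) := by
      rw [abs_mul]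
      calc |qAC ρ| * |u ρ + a| ≤ 1 * |u ρ + a| :=
            mul_le_mul_of_nonneg_right (abs_qAC_le ρ) (abs_nonneg _)
        _ = |u ρ + a| := one_mul _
        _ ≤ C₂ * Real.exp (-α * ρ) := hzdecay ρ hρ
    have h2 := hBbound ρ hρ
    calc |qAC ρ * (u ρ + a) + B ρ| ≤ |qAC ρ * (u ρ + a)| + |B ρ| := abs_add_le _ _
      _ ≤ C₃ * Real.exp (-α * ρ) := by rw [hC₃def]; linarith
  -- first derivative decay via mean value theorem and FTC
  have hfirstdecay : ∀ ρ, 0 ≤ ρ → |deriv u ρ| ≤ (3 * C₂ + C₃) * Real.exp (-α * ρ) := by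
    intro ρ hρ
    obtain ⟨ξ, hξ, hslope⟩ := exists_hasDerivAt_eq_slope u (deriv u)
      (by linarith : ρ < ρ + 1) (hd1.continuous.continuousOn)
      (fun x _ => (hd1 x).hasDerivAt)
    have hξ0 : 0 ≤ ξ := by linarith [hξ.1]
    have hξρ : ρ ≤ ξ := hξ.1.le
    have hξ1 : ξ ≤ ρ + 1 := hξ.2.le
    have hslope' : deriv u ξ = u (ρ + 1) - u ρ := by
      rw [hslope]; simp
    have hderivξ : |deriv u ξ| ≤ 2 * C₂ * Real.exp (-α * ρ) := by
      rw [hslope']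
      have e1 := hzdecay ρ hρ
      have e2 := hzdecay (ρ + 1) (by linarith)
      have e3 : Real.exp (-α * (ρ + 1)) ≤ Real.exp (-α * ρ) :=
        Real.exp_le_exp.2 (by nlinarith)
      have : u (ρ + 1) - u ρ = (u (ρ + 1) + a) - (u ρ + a) := by ring
      rw [this]
      calc |(u (ρ + 1) + a) - (u ρ + a)| ≤ |u (ρ + 1) + a| + |u ρ + a| := abs_sub _ _
        _ ≤ 2 * C₂ * Real.exp (-α * ρ) := by nlinarith
    have hftc : ∫ s in ρ..ξ, deriv (deriv u) s = deriv u ξ - deriv u ρ :=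
      intervalIntegral.integral_eq_sub_of_hasDerivAt
        (fun s _ => (hd2 s).hasDerivAt) (hcont2.intervalIntegrable ρ ξ)
    have hintbound : |∫ s in ρ..ξ, deriv (deriv u) s| ≤ C₃ * Real.exp (-α * ρ) := by
      have h1 : ∀ s ∈ Set.uIoc ρ ξ, ‖deriv (deriv u) s‖ ≤ C₃ * Real.exp (-α * ρ) := by
        intro s hs
        rw [Set.uIoc_of_le hξρ] at hs
        have hs0 : 0 ≤ s := le_trans hρ hs.1.le
        have := hseconddecay s hs0
        have hmono : Real.exp (-α * s) ≤ Real.exp (-α * ρ) :=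
          Real.exp_le_exp.2 (by nlinarith [hs.1.le])
        rw [Real.norm_eq_abs]
        calc |deriv (deriv u) s| ≤ C₃ * Real.exp (-α * s) := this
          _ ≤ C₃ * Real.exp (-α * ρ) := by
              exact mul_le_mul_of_nonneg_left hmono hC₃pos.le
      have h2 := intervalIntegral.norm_integral_le_of_norm_le_const h1
      rw [Real.norm_eq_abs] at h2
      have h3 : |ξ - ρ| ≤ 1 := by rw [abs_of_nonneg (by linarith)]; linarith
      have hE := Real.exp_pos (-α * ρ)
      have h4 := mul_le_mul_of_nonneg_left h3 (mul_pos hC₃pos hE).le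
      rw [mul_one] at h4
      linarith
    have : deriv u ρ = deriv u ξ - ∫ s in ρ..ξ, deriv (deriv u) s := by
      rw [hftc]; ring
    rw [this]
    calc |deriv u ξ - ∫ s in ρ..ξ, deriv (deriv u) s|
        ≤ |deriv u ξ| + |∫ s in ρ..ξ, deriv (deriv u) s| := abs_sub _ _
      _ ≤ (3 * C₂ + C₃) * Real.exp (-α * ρ) := by
          have := Real.exp_pos (-α * ρ)
          nlinarith
  refine ⟨3 * C₂ + 2 * C₃, by linarith, fun ρ hρ => ⟨?_, ?_, ?_⟩⟩
  · have := hzdecay ρ hρ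
    have hE := Real.exp_pos (-α * ρ)
    linarith [mul_nonneg (by linarith : (0:ℝ) ≤ 2 * C₂ + 2 * C₃) hE.le]
  · have := hfirstdecay ρ hρ
    have hE := Real.exp_pos (-α * ρ)
    linarith [mul_nonneg (by linarith : (0:ℝ) ≤ C₃) hE.le]
  · have := hseconddecay ρ hρ
    have hE := Real.exp_pos (-α * ρ)
    linarith [mul_nonneg (by linarith : (0:ℝ) ≤ 3 * C₂ + C₃) hE.le]

/-- Uniqueness and exponential decay for the linearized Allen–Cahn equation
(Lemma A.1 of the paper, fixed parameter): under the exponential matching assumptions on `A`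
and the compatibility condition `∫_ℝ A θ₀' dρ = 0`, the bounded `C²` solution of
`w'' − f''(θ₀) w = A`, `w(0) = 0` is unique, and it satisfies
`|w(±ρ) + A^±| ≤ C e^{−αρ}`, `|w'(ρ)| + |w'(−ρ)| ≤ C e^{−αρ}` and
`|w''(ρ)| + |w''(−ρ)| ≤ C e^{−αρ}` for all `ρ ≥ 0`. -/
theorem statement8 (α C₀ : ℝ) (hα : 0 < α) (hα1 : α < 1) (hC₀ : 0 < C₀)
    (A : ℝ → ℝ) (hA : Continuous A) (Ap Am : ℝ)
    (hAp : ∀ ρ : ℝ, 0 ≤ ρ → |A ρ - Ap| ≤ C₀ * Real.exp (-α * ρ))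
    (hAm : ∀ ρ : ℝ, 0 ≤ ρ → |A (-ρ) - Am| ≤ C₀ * Real.exp (-α * ρ))
    (hcomp : (∫ ρ : ℝ, A ρ * deriv optimalProfile ρ) = 0) :
    (∀ w₁ w₂ : ℝ → ℝ, IsLinACSolution A w₁ → IsLinACSolution A w₂ → w₁ = w₂) ∧
    (∀ w : ℝ → ℝ, IsLinACSolution A w →
      ∃ C : ℝ, 0 < C ∧ ∀ ρ : ℝ, 0 ≤ ρ →
        |w ρ + Ap| ≤ C * Real.exp (-α * ρ) ∧
        |w (-ρ) + Am| ≤ C * Real.exp (-α * ρ) ∧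
        |deriv w ρ| + |deriv w (-ρ)| ≤ C * Real.exp (-α * ρ) ∧
        |deriv (deriv w) ρ| + |deriv (deriv w) (-ρ)| ≤ C * Real.exp (-α * ρ)) := by
  constructor
  · -- uniqueness
    rintro w₁ w₂ ⟨⟨M₁, hb₁⟩, hc₁, hode₁, h0₁⟩ ⟨⟨M₂, hb₂⟩, hc₂, hode₂, h0₂⟩
    obtain ⟨hd11, hd12, -⟩ := contdiff_two_unpack w₁ hc₁
    obtain ⟨hd21, hd22, -⟩ := contdiff_two_unpack w₂ hc₂
    set v : ℝ → ℝ := fun ρ => w₁ ρ - w₂ ρ with hvdef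
    have hderiv : deriv v = fun ρ => deriv w₁ ρ - deriv w₂ ρ :=
      funext fun ρ => deriv_sub (hd11 ρ) (hd21 ρ)
    have hode : ∀ ρ, deriv (deriv v) ρ = qAC ρ * v ρ := by
      intro ρ
      rw [hderiv]
      have h2 : deriv (fun ρ => deriv w₁ ρ - deriv w₂ ρ) ρ
          = deriv (deriv w₁) ρ - deriv (deriv w₂) ρ := deriv_sub (hd12 ρ) (hd22 ρ)
      rw [h2]
      have e1 := hode₁ ρ
      have e2 := hode₂ ρ
      simp only [qAC, hvdef]
      linarith
    have hzero := hom_unique v (M₁ + M₂)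
      (fun ρ => by
        have := abs_sub (w₁ ρ) (w₂ ρ)
        have := hb₁ ρ; have := hb₂ ρ
        simp only [hvdef]
        linarith [abs_sub (w₁ ρ) (w₂ ρ)])
      (hc₁.sub hc₂) hode (by simp [hvdef, h0₁, h0₂])
    funext ρ
    have := hzero ρ
    simp only [hvdef] at this
    linarith
  · -- decay
    rintro w ⟨⟨K, hbK⟩, hc, hodew, h0⟩
    have hode' : ∀ ρ, deriv (deriv w) ρ = qAC ρ * w ρ + A ρ := by
      intro ρ
      have := hodew ρ
      simp only [qAC]
      linarith
    obtain ⟨Cr, hCrpos, hr⟩ :=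
      one_side w A Ap K α C₀ hα hα1 hc hbK hode' hC₀ hAp
    -- the reflected function
    set u : ℝ → ℝ := fun ρ => w (-ρ) with hudef
    have hu2 : ContDiff ℝ 2 u := hc.comp contDiff_neg
    have hderivu : ∀ ρ, deriv u ρ = -deriv w (-ρ) := fun ρ => deriv_comp_neg w ρ
    have hderivu2 : ∀ ρ, deriv (deriv u) ρ = deriv (deriv w) (-ρ) := by
      intro ρ
      have h1 : deriv u = fun ρ => -deriv w (-ρ) := funext hderivu
      rw [h1, deriv.fun_neg, deriv_comp_neg (deriv w) ρ, neg_neg]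
    have hodeu : ∀ ρ, deriv (deriv u) ρ = qAC ρ * u ρ + A (-ρ) := by
      intro ρ
      rw [hderivu2, hode' (-ρ), qAC_even]
    obtain ⟨Cl, hClpos, hl⟩ :=
      one_side u (fun ρ => A (-ρ)) Am K α C₀ hα hα1 hu2
        (fun ρ => hbK (-ρ)) hodeu hC₀ hAm
    refine ⟨Cr + Cl, by linarith, fun ρ hρ => ?_⟩
    obtain ⟨hr1, hr2, hr3⟩ := hr ρ hρ
    obtain ⟨hl1, hl2, hl3⟩ := hl ρ hρ
    have hE := (Real.exp_pos (-α * ρ)).le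
    have hCrE : 0 ≤ Cr * Real.exp (-α * ρ) := mul_nonneg hCrpos.le hE
    have hClE : 0 ≤ Cl * Real.exp (-α * ρ) := mul_nonneg hClpos.le hE
    have hul : |w (-ρ) + Am| ≤ Cl * Real.exp (-α * ρ) := hl1
    have hul2 : |deriv w (-ρ)| ≤ Cl * Real.exp (-α * ρ) := by
      have h := hl2
      rw [hderivu ρ, abs_neg] at h
      exact h
    have hul3 : |deriv (deriv w) (-ρ)| ≤ Cl * Real.exp (-α * ρ) := by
      have h := hl3
      rw [hderivu2 ρ] at h
      exact h
    refine ⟨by nlinarith, by nlinarith, ?_, ?_⟩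
    · have : (Cr + Cl) * Real.exp (-α * ρ)
          = Cr * Real.exp (-α * ρ) + Cl * Real.exp (-α * ρ) := by ring
      rw [this]
      exact add_le_add hr2 hul2
    · have : (Cr + Cl) * Real.exp (-α * ρ)
          = Cr * Real.exp (-α * ρ) + Cl * Real.exp (-α * ρ) := by ring
      rw [this]
      exact add_le_add hr3 hul3
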